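/- Let τ be a rearrangement of dyadic intervals satisfying Property P with constant M: for each dyadic J, the collection {τ(I) : τ(I) ⊆ J} decomposes as a disjoint union ⋃ τ(L_i) ∪ ⋃ E_i where ⋃E_i satisfies the M-Carleson condition, |τ(I)|/|I| ≤ M(|τ(L_i)*| + |E_i*|)/|L_i*| for I ∈ L_i, and Σ_i |τ(L_i)*| ≤ M|J|. Then the operator T h_I = h_{τ(I)} is bounded on dyadic BMO with ‖Tx‖² ≤ 6M² ‖x‖². -/

import Mathlib

open MeasureTheory

/-- A dyadic interval `[k/2^n, (k+1)/2^n)` of `[0,1)`. -/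
structure DI where
  n : ℕ
  k : ℕ
  hk : k < 2 ^ n

namespace DI

/-- The underlying set of a dyadic interval. -/
def carrier (I : DI) : Set ℝ := Set.Ico ((I.k : ℝ) / 2 ^ I.n) ((I.k + 1 : ℝ) / 2 ^ I.n)

/-- The length `|I| = 2^{-n}` of a dyadic interval. -/
noncomputable def len (I : DI) : ENNReal := ENNReal.ofReal ((2 : ℝ)⁻¹ ^ I.n)

end DI

/-- The Carleson sum `∑_{I ∈ L, I ⊆ J} |I|`. -/
noncomputable def carlesonSum (L : Set DI) (J : DI) : ENNReal :=
  ∑' I : {I : DI // I ∈ L ∧ I.carrier ⊆ J.carrier}, I.1.len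

/-- `L` satisfies the `M`-Carleson condition. -/
def CarlesonLE (L : Set DI) (M : ENNReal) : Prop :=
  ∀ J : DI, carlesonSum L J ≤ M * J.len

/-- The Carleson constant `⟦L⟧ = sup_J (1/|J|) ∑_{I ∈ L, I ⊆ J} |I|`. -/
noncomputable def carlesonConst (L : Set DI) : ENNReal :=
  ⨆ J : DI, carlesonSum L J / J.len

/-- The square of the dyadic BMO norm of `x = ∑ x_I h_I`,
`‖x‖² = sup_J (1/|J|) ∑_{I ⊆ J} x_I² |I|`, in terms of the Haar coefficients. -/
noncomputable def bmoSq (x : DI → ℝ) : ENNReal :=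
  ⨆ J : DI, (∑' I : {I : DI // I.carrier ⊆ J.carrier},
      ENNReal.ofReal ((x I.1) ^ 2) * I.1.len) / J.len

/-- `|L*|`: the Lebesgue measure of the set covered by the collection `L`. -/
noncomputable def covMeas (L : Set DI) : ENNReal := volume (⋃ I ∈ L, I.carrier)

/-- `y` is the coefficient function of `Tx` where `T h_I = h_{τ(I)}` and `x` has
coefficients `x_I`. -/
def HaarCompat (τ : DI → DI) (x y : DI → ℝ) : Prop :=
  (∀ I, y (τ I) = x I) ∧ ∀ J, J ∉ Set.range τ → y J = 0

/-- The maximal elements of a collection of dyadic intervals, under inclusion. -/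
def maxSet (S : Set DI) : Set DI :=
  {I | I ∈ S ∧ ∀ K ∈ S, I.carrier ⊆ K.carrier → I = K}


/-! For a dyadic `J`, the coefficients of `Tx` below `J` sit on the `τ(L_i)` and on the `E_i`.
On `τ(L_i)` the size condition turns `∑ x_I² |τ(I)|` into `M (|τ(L_i)*| + |E_i*|) / |L_i*|` times
`∑_{I ∈ L_i} x_I² |I|`, and the latter is at most `‖x‖² |L_i*|` once `L_i` is grouped under its
maximal intervals. On `⋃ E_i` every coefficient is at most `‖x‖²`, and the Carleson condition
bounds both `∑_{K ∈ ⋃ E_i} |K|` and `∑ |E_i*|` by `M |J|`. Altogether the local sum is at most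
`(2M² + M) ‖x‖² |J| ≤ 3M² ‖x‖² |J|`, since Property `P` at `J = τ(I)` forces `M ≥ 1`. -/

open MeasureTheory Set Function
open scoped ENNReal

namespace DI

instance : Countable DI :=
  Injective.countable (f := fun I : DI => (I.n, I.k)) fun
    | ⟨_, _, _⟩, ⟨_, _, _⟩, h => by cases h; rfl

lemma ext {I K : DI} (hn : I.n = K.n) (hk : I.k = K.k) : I = K := by
  cases I; cases K; cases hn; cases hk; rfl

lemma mem_carrier {I : DI} {x : ℝ} : x ∈ I.carrier ↔ 0 ≤ x ∧ ⌊x * 2 ^ I.n⌋₊ = I.k := by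
  have hpos : (0 : ℝ) < 2 ^ I.n := by positivity
  rw [carrier, mem_Ico, div_le_iff₀ hpos, lt_div_iff₀ hpos]
  constructor
  · rintro ⟨hle, hlt⟩
    have hx : 0 ≤ x := nonneg_of_mul_nonneg_left ((Nat.cast_nonneg _).trans hle) hpos
    exact ⟨hx, (Nat.floor_eq_iff (by positivity)).2 ⟨hle, hlt⟩⟩
  · rintro ⟨hx, hk⟩
    exact (Nat.floor_eq_iff (by positivity)).1 hk

lemma left_mem_carrier (I : DI) : (I.k : ℝ) / 2 ^ I.n ∈ I.carrier :=
  left_mem_Ico.2 <| div_lt_div_of_pos_right (lt_add_one _) (by positivity)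

lemma floor_mul_two_pow_of_le (x : ℝ) {n m : ℕ} (h : n ≤ m) :
    ⌊x * 2 ^ n⌋₊ = ⌊x * 2 ^ m⌋₊ / 2 ^ (m - n) := by
  rw [← Nat.floor_div_natCast]
  congr 1
  push_cast
  rw [eq_div_iff (by positivity), mul_assoc, ← pow_add, Nat.add_sub_cancel' h]

lemma carrier_subset_of_n_le {I K : DI} (hn : I.n ≤ K.n)
    (h : (I.carrier ∩ K.carrier).Nonempty) : K.carrier ⊆ I.carrier := by
  obtain ⟨x, hxI, hxK⟩ := h
  intro z hz
  rw [mem_carrier] at *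
  refine ⟨hz.1, ?_⟩
  rw [floor_mul_two_pow_of_le z hn, hz.2, ← hxK.2, ← floor_mul_two_pow_of_le x hn, hxI.2]

lemma volume_carrier (I : DI) : volume I.carrier = I.len := by
  rw [carrier, Real.volume_Ico, len, inv_pow]
  congr 1
  field_simp
  ring

lemma len_ne_zero (I : DI) : I.len ≠ 0 := by
  simp only [len, ne_eq, ENNReal.ofReal_eq_zero, not_le]
  positivity

lemma len_ne_top (I : DI) : I.len ≠ ∞ := ENNReal.ofReal_ne_top

lemma n_le_of_carrier_subset {I K : DI} (h : I.carrier ⊆ K.carrier) : K.n ≤ I.n := by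
  have hlen : I.len ≤ K.len := by
    simpa only [volume_carrier] using measure_mono (μ := volume) h
  rw [len, len, ENNReal.ofReal_le_ofReal_iff (by positivity)] at hlen
  exact (pow_le_pow_iff_right_of_lt_one₀ (by norm_num) (by norm_num)).1 hlen

lemma eq_of_carrier_subset_of_n_le {I K : DI} (h : I.carrier ⊆ K.carrier) (hn : I.n ≤ K.n) :
    I = K := by
  have hn' : I.n = K.n := le_antisymm hn (n_le_of_carrier_subset h)
  have hx := mem_carrier.1 (h (left_mem_carrier I))
  have hxI := mem_carrier.1 (left_mem_carrier I)
  exact ext hn' (hxI.2.symm.trans (hn' ▸ hx.2))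

lemma carrier_subset_or_subset {I K : DI} (h : (I.carrier ∩ K.carrier).Nonempty) :
    I.carrier ⊆ K.carrier ∨ K.carrier ⊆ I.carrier := by
  rcases le_total I.n K.n with hn | hn
  · exact Or.inr (carrier_subset_of_n_le hn h)
  · exact Or.inl (carrier_subset_of_n_le hn (inter_comm _ _ ▸ h))

lemma finite_setOf_carrier_subset (I : DI) : {K : DI | I.carrier ⊆ K.carrier}.Finite := by
  refine Finite.of_finite_image ((finite_Iic I.n).subset ?_) fun K hK K' hK' (hn : K.n = K'.n) => ?_
  · rintro _ ⟨K, hK, rfl⟩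
    exact n_le_of_carrier_subset hK
  · obtain ⟨z, hz⟩ : I.carrier.Nonempty := ⟨_, left_mem_carrier I⟩
    rcases carrier_subset_or_subset ⟨z, hK hz, hK' hz⟩ with h | h
    · exact eq_of_carrier_subset_of_n_le h hn.le
    · exact (eq_of_carrier_subset_of_n_le h hn.ge).symm

lemma exists_mem_maxSet_carrier_subset {S : Set DI} {I : DI} (hI : I ∈ S) :
    ∃ J ∈ maxSet S, I.carrier ⊆ J.carrier := by
  obtain ⟨J, ⟨hJS, hIJ⟩, hmin⟩ := Finite.exists_minimalFor (fun K : DI => K.n)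
    {K | K ∈ S ∧ I.carrier ⊆ K.carrier}
    ((finite_setOf_carrier_subset I).subset fun K hK => hK.2) ⟨I, hI, subset_rfl⟩
  refine ⟨J, ⟨hJS, fun K hK hJK => eq_of_carrier_subset_of_n_le hJK ?_⟩, hIJ⟩
  exact hmin ⟨hK, hIJ.trans hJK⟩ (n_le_of_carrier_subset hJK)

lemma pairwiseDisjoint_maxSet (S : Set DI) : (maxSet S).PairwiseDisjoint carrier := by
  intro J hJ J' hJ' hne
  rw [onFun, disjoint_iff_inter_eq_empty, ← not_nonempty_iff_eq_empty]
  intro h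
  rcases carrier_subset_or_subset h with h | h
  · exact hne (hJ.2 J' hJ'.1 h)
  · exact hne (hJ'.2 J hJ.1 h).symm

lemma covMeas_eq_tsum_maxSet (S : Set DI) : covMeas S = ∑' J : maxSet S, J.1.len := by
  have hcover : ⋃ I ∈ S, I.carrier = ⋃ J ∈ maxSet S, J.carrier := by
    refine Subset.antisymm (iUnion₂_subset fun I hI => ?_)
      (iUnion₂_mono' fun J hJ => ⟨J, hJ.1, subset_rfl⟩)
    obtain ⟨J, hJ, hIJ⟩ := exists_mem_maxSet_carrier_subset hI
    exact hIJ.trans (subset_biUnion_of_mem hJ)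
  rw [covMeas, hcover, measure_biUnion (to_countable _) (pairwiseDisjoint_maxSet S)
    fun J _ => measurableSet_Ico]
  simp only [volume_carrier]

lemma len_le_covMeas {S : Set DI} {J : DI} (hJ : J ∈ S) : J.len ≤ covMeas S :=
  volume_carrier J ▸ measure_mono (subset_biUnion_of_mem hJ)

lemma covMeas_le_tsum_len (S : Set DI) : covMeas S ≤ ∑' J : S, J.1.len :=
  covMeas_eq_tsum_maxSet S ▸ ENNReal.tsum_mono_subtype _ fun _ hJ => hJ.1

end DI

open DI

lemma ENNReal.tsum_subtype_le_of_inter_support_subset {α : Type*} {f : α → ℝ≥0∞} {s t : Set α}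
    (h : s ∩ support f ⊆ t) : ∑' a : s, f a ≤ ∑' a : t, f a := by
  rw [tsum_subtype, tsum_subtype, ← indicator_inter_support]
  exact ENNReal.tsum_le_tsum (indicator_le_indicator_of_subset h fun _ => zero_le)

lemma ENNReal.tsum_iUnion_eq_tsum {α ι : Type*} (f : α → ℝ≥0∞) {t : ι → Set α}
    (ht : Pairwise (Disjoint on t)) : ∑' a : ⋃ i, t i, f a = ∑' i, ∑' a : t i, f a := by
  rw [← (unionEqSigmaOfDisjoint ht).symm.tsum_eq, ENNReal.tsum_sigma']
  rfl

noncomputable def haarEnergy (x : DI → ℝ) (I : DI) : ℝ≥0∞ := ENNReal.ofReal (x I ^ 2) * I.len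

lemma tsum_haarEnergy_le_bmoSq_mul_len (x : DI → ℝ) (J : DI) :
    ∑' I : {I : DI // I.carrier ⊆ J.carrier}, haarEnergy x I ≤ bmoSq x * J.len :=
  (ENNReal.div_le_iff (len_ne_zero J) (len_ne_top J)).1 <|
    le_iSup (fun J : DI => (∑' I : {I : DI // I.carrier ⊆ J.carrier}, haarEnergy x I) / J.len) J

lemma ofReal_sq_le_bmoSq (x : DI → ℝ) (I : DI) : ENNReal.ofReal (x I ^ 2) ≤ bmoSq x := by
  refine (ENNReal.mul_le_mul_iff_left (len_ne_zero I) (len_ne_top I)).1 ?_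
  calc ENNReal.ofReal (x I ^ 2) * I.len
      ≤ ∑' K : {K : DI // K.carrier ⊆ I.carrier}, haarEnergy x K :=
        ENNReal.le_tsum (⟨I, subset_rfl⟩ : {K : DI // K.carrier ⊆ I.carrier})
    _ ≤ bmoSq x * I.len := tsum_haarEnergy_le_bmoSq_mul_len x I

lemma tsum_haarEnergy_le_bmoSq_mul_covMeas (x : DI → ℝ) (S : Set DI) :
    ∑' I : S, haarEnergy x I ≤ bmoSq x * covMeas S := by
  have hS : S ⊆ ⋃ J : maxSet S, {I | I.carrier ⊆ J.1.carrier} := fun I hI => by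
    obtain ⟨J, hJ, hIJ⟩ := exists_mem_maxSet_carrier_subset hI
    exact mem_iUnion.2 ⟨⟨J, hJ⟩, hIJ⟩
  calc ∑' I : S, haarEnergy x I
      ≤ ∑' J : maxSet S, ∑' I : {I : DI | I.carrier ⊆ J.1.carrier}, haarEnergy x I :=
        (ENNReal.tsum_mono_subtype _ hS).trans (ENNReal.tsum_iUnion_le_tsum _ _)
    _ ≤ ∑' J : maxSet S, bmoSq x * J.1.len :=
        ENNReal.tsum_le_tsum fun J => tsum_haarEnergy_le_bmoSq_mul_len x J
    _ = bmoSq x * covMeas S := by rw [ENNReal.tsum_mul_left, covMeas_eq_tsum_maxSet]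

lemma tsum_haarEnergy_le_mul_tsum_len {y : DI → ℝ} {C : ℝ≥0∞}
    (hy : ∀ K, ENNReal.ofReal (y K ^ 2) ≤ C) (B : Set DI) :
    ∑' K : B, haarEnergy y K ≤ C * ∑' K : B, K.1.len := by
  rw [← ENNReal.tsum_mul_left]
  exact ENNReal.tsum_le_tsum fun K => mul_le_mul_left (hy K) _

lemma len_le_carlesonSum {S : Set DI} {J : DI} (hJ : J ∈ S) : J.len ≤ carlesonSum S J :=
  ENNReal.le_tsum (⟨J, hJ, subset_rfl⟩ : {K : DI // K ∈ S ∧ K.carrier ⊆ J.carrier})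

lemma tsum_len_le_of_carlesonLE {B : Set DI} {M : ℝ≥0∞} (hB : CarlesonLE B M) {J : DI}
    (hBJ : ∀ K ∈ B, K.carrier ⊆ J.carrier) : ∑' K : B, K.1.len ≤ M * J.len := by
  have hsep : B = {K | K ∈ B ∧ K.carrier ⊆ J.carrier} := (sep_eq_self_iff_mem_true.2 hBJ).symm
  rw [hsep]
  exact hB J

section HaarCompat

variable {τ : DI → DI} {x y : DI → ℝ}

lemma ofReal_sq_le_bmoSq_of_haarCompat (hxy : HaarCompat τ x y) (K : DI) :
    ENNReal.ofReal (y K ^ 2) ≤ bmoSq x := by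
  by_cases hK : K ∈ range τ
  · obtain ⟨I, rfl⟩ := hK
    exact hxy.1 I ▸ ofReal_sq_le_bmoSq x I
  · simp [hxy.2 K hK]

lemma tsum_haarEnergy_image_le (hxy : ∀ I, y (τ I) = x I) {L : Set DI} {c : ℝ≥0∞}
    (hc : ∀ I ∈ L, (τ I).len / I.len ≤ c / covMeas L) :
    ∑' K : τ '' L, haarEnergy y K ≤ bmoSq x * c := by
  have hterm : ∀ I : L, haarEnergy y (τ I) ≤ c / covMeas L * haarEnergy x I := fun I => by
    have hlen := (ENNReal.div_le_iff (len_ne_zero _) (len_ne_top _)).1 (hc I I.2)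
    calc haarEnergy y (τ I) = ENNReal.ofReal (x I ^ 2) * (τ I).len := by rw [haarEnergy, hxy]
      _ ≤ ENNReal.ofReal (x I ^ 2) * (c / covMeas L * I.1.len) := by gcongr
      _ = c / covMeas L * haarEnergy x I := by rw [haarEnergy]; ring
  calc ∑' K : τ '' L, haarEnergy y K
      ≤ ∑' I : L, haarEnergy y (τ I) :=
        ENNReal.tsum_le_tsum_comp_of_surjective imageFactorization_surjective _
    _ ≤ c / covMeas L * ∑' I : L, haarEnergy x I := by
        rw [← ENNReal.tsum_mul_left]; exact ENNReal.tsum_le_tsum hterm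
    _ ≤ c / covMeas L * (bmoSq x * covMeas L) := by
        gcongr; exact tsum_haarEnergy_le_bmoSq_mul_covMeas x L
    _ ≤ bmoSq x * c := by
        rw [mul_left_comm, mul_comm (c / _)]; exact mul_le_mul_right ENNReal.mul_div_le _

end HaarCompat

lemma one_le_of_mem_cover {A E : ℕ → Set DI} {M : ℝ≥0∞} {J : DI}
    (hJ : J ∈ (⋃ i, A i) ∪ ⋃ i, E i) (hE : CarlesonLE (⋃ i, E i) M)
    (hA : ∑' i, covMeas (A i) ≤ M * J.len) : 1 ≤ M := by
  refine (ENNReal.mul_le_mul_iff_left (len_ne_zero J) (len_ne_top J)).1 ?_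
  rw [one_mul]
  rcases hJ with hJ | hJ
  · obtain ⟨i, hi⟩ := mem_iUnion.1 hJ
    exact (len_le_covMeas hi).trans ((ENNReal.le_tsum i).trans hA)
  · exact (len_le_carlesonSum hJ).trans (hE J)

lemma tsum_covMeas_le_of_carlesonLE {E : ℕ → Set DI} (hEd : Pairwise (Disjoint on E)) {M : ℝ≥0∞}
    (hE : CarlesonLE (⋃ i, E i) M) {J : DI} (hEJ : ∀ K ∈ ⋃ i, E i, K.carrier ⊆ J.carrier) :
    ∑' i, covMeas (E i) ≤ M * J.len :=
  calc ∑' i, covMeas (E i) ≤ ∑' i, ∑' K : E i, K.1.len :=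
        ENNReal.tsum_le_tsum fun i => covMeas_le_tsum_len (E i)
    _ = ∑' K : ⋃ i, E i, K.1.len := (ENNReal.tsum_iUnion_eq_tsum _ hEd).symm
    _ ≤ M * J.len := tsum_len_le_of_carlesonLE hE hEJ

lemma tsum_haarEnergy_le_of_decomposition {τ : DI → DI} {x y : DI → ℝ}
    (hxy : HaarCompat τ x y) {M : ℝ≥0∞} (hM : 1 ≤ M) {J : DI} {L E : ℕ → Set DI}
    (hcover : (⋃ i, τ '' L i) ∪ (⋃ i, E i) = {K | K ∈ range τ ∧ K.carrier ⊆ J.carrier})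
    (hEd : Pairwise (Disjoint on E)) (hE : CarlesonLE (⋃ i, E i) M)
    (hL : ∀ i, ∀ I ∈ L i,
      (τ I).len / I.len ≤ M * (covMeas (τ '' L i) + covMeas (E i)) / covMeas (L i))
    (hLJ : ∑' i, covMeas (τ '' L i) ≤ M * J.len) :
    ∑' K : {K : DI // K.carrier ⊆ J.carrier}, haarEnergy y K ≤ 3 * M ^ 2 * bmoSq x * J.len := by
  have hEJ : ∀ K ∈ ⋃ i, E i, K.carrier ⊆ J.carrier := fun K hK =>
    (hcover.subset (Or.inr hK)).2
  have hsupport : {K : DI | K.carrier ⊆ J.carrier} ∩ support (haarEnergy y) ⊆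
      (⋃ i, τ '' L i) ∪ ⋃ i, E i := by
    rintro K ⟨hKJ, hK⟩
    refine hcover ▸ ⟨by_contra fun hKτ => hK ?_, hKJ⟩
    simp [haarEnergy, hxy.2 K hKτ]
  calc ∑' K : {K : DI // K.carrier ⊆ J.carrier}, haarEnergy y K
      ≤ ∑' i, ∑' K : τ '' L i, haarEnergy y K + ∑' K : ⋃ i, E i, haarEnergy y K :=
        (ENNReal.tsum_subtype_le_of_inter_support_subset hsupport).trans <|
          (ENNReal.tsum_union_le _ _ _).trans (add_le_add_left (ENNReal.tsum_iUnion_le_tsum _ _) _)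
    _ ≤ ∑' i, bmoSq x * (M * (covMeas (τ '' L i) + covMeas (E i)))
          + bmoSq x * ∑' K : ⋃ i, E i, K.1.len :=
        add_le_add (ENNReal.tsum_le_tsum fun i => tsum_haarEnergy_image_le hxy.1 (hL i))
          (tsum_haarEnergy_le_mul_tsum_len (ofReal_sq_le_bmoSq_of_haarCompat hxy) _)
    _ = bmoSq x * M * (∑' i, covMeas (τ '' L i) + ∑' i, covMeas (E i))
          + bmoSq x * ∑' K : ⋃ i, E i, K.1.len := by
        rw [ENNReal.tsum_mul_left, ENNReal.tsum_mul_left, ENNReal.tsum_add, mul_assoc]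
    _ ≤ bmoSq x * M * (M * J.len + M * J.len) + bmoSq x * (M * J.len) := by
        gcongr
        · exact tsum_covMeas_le_of_carlesonLE hEd hE hEJ
        · exact tsum_len_le_of_carlesonLE hE hEJ
    _ = (2 * M ^ 2 + M) * bmoSq x * J.len := by ring
    _ ≤ 3 * M ^ 2 * bmoSq x * J.len := by
        gcongr
        calc 2 * M ^ 2 + M ≤ 2 * M ^ 2 + M ^ 2 := by
              gcongr; exact le_self_pow₀ hM two_ne_zero
          _ = 3 * M ^ 2 := by ring

theorem stmt16_general (τ : DI → DI) (M : ENNReal)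
    (hP : ∀ J : DI,
      ∃ L E : ℕ → Set DI,
        ((⋃ i, τ '' L i) ∪ (⋃ i, E i) =
            {K : DI | K ∈ Set.range τ ∧ K.carrier ⊆ J.carrier}) ∧
        (Pairwise fun i j => Disjoint (τ '' L i) (τ '' L j)) ∧
        (Pairwise fun i j => Disjoint (E i) (E j)) ∧
        (∀ i j, Disjoint (τ '' L i) (E j)) ∧
        CarlesonLE (⋃ i, E i) M ∧
        (∀ i, ∀ I ∈ L i,
          (τ I).len / I.len ≤ M * (covMeas (τ '' L i) + covMeas (E i)) / covMeas (L i)) ∧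
        ∑' i : ℕ, covMeas (τ '' L i) ≤ M * J.len)
    (x y : DI → ℝ) (hxy : HaarCompat τ x y) :
    bmoSq y ≤ 6 * M ^ 2 * bmoSq x := by
  have hM : 1 ≤ M := by
    let I₀ : DI := ⟨0, 0, Nat.one_pos⟩
    obtain ⟨L, E, hcover, -, -, -, hE, -, hLJ⟩ := hP (τ I₀)
    exact one_le_of_mem_cover (hcover ▸ ⟨mem_range_self I₀, subset_rfl⟩) hE hLJ
  refine iSup_le fun J => (ENNReal.div_le_iff (len_ne_zero J) (len_ne_top J)).2 ?_
  obtain ⟨L, E, hcover, -, hEd, -, hE, hL, hLJ⟩ := hP J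
  calc ∑' K : {K : DI // K.carrier ⊆ J.carrier}, haarEnergy y K
      ≤ 3 * M ^ 2 * bmoSq x * J.len :=
        tsum_haarEnergy_le_of_decomposition hxy hM hcover hEd hE hL hLJ
    _ ≤ 6 * M ^ 2 * bmoSq x * J.len := by gcongr; norm_num

/-- If `τ` satisfies Property `P` with constant `M`, then `T h_I = h_{τ(I)}` is
bounded on dyadic BMO with `‖Tx‖² ≤ 6M² ‖x‖²`. -/
theorem stmt16 (τ : DI → DI) (hτ : Function.Injective τ) (M : ENNReal)
    (hP : ∀ J : DI,
      ∃ L E : ℕ → Set DI,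
        ((⋃ i, τ '' L i) ∪ (⋃ i, E i) =
            {K : DI | K ∈ Set.range τ ∧ K.carrier ⊆ J.carrier}) ∧
        (Pairwise fun i j => Disjoint (τ '' L i) (τ '' L j)) ∧
        (Pairwise fun i j => Disjoint (E i) (E j)) ∧
        (∀ i j, Disjoint (τ '' L i) (E j)) ∧
        CarlesonLE (⋃ i, E i) M ∧
        (∀ i, ∀ I ∈ L i,
          (τ I).len / I.len ≤ M * (covMeas (τ '' L i) + covMeas (E i)) / covMeas (L i)) ∧
        ∑' i : ℕ, covMeas (τ '' L i) ≤ M * J.len)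
    (x y : DI → ℝ) (hxy : HaarCompat τ x y) :
    bmoSq y ≤ 6 * M ^ 2 * bmoSq x :=
  stmt16_general τ M hP x y hxy
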